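/- First-order Chapman-Enskog moment equations for the D3Q7 thermal model: let w̄ ∈ (0,1), c_s² = w̄/3, Δt > 0, let Λ = diag(ς_0,…,ς_6) with all ς_k ≠ 0, let ρc_v > 0, and let a ∈ ℝ (representing ∂_{t₁}T), b ∈ ℝ³ (representing ∇₁T), F̄ ∈ ℝ, and g⁽¹⁾ ∈ ℝ⁷ with Σ_{i=0}^{6} g⁽¹⁾_i = 0. If for every i = 0,…,6 the first-order equation ρc_v w_i a + (c_i·b) w_i = −(1/Δt)(M⁻¹ΛM g⁽¹⁾)_i + w_i F̄ holds, then: (i) ρc_v a = F̄, and (ii) ς_k (M g⁽¹⁾)_k = −Δt c_s² b_k for k = 1, 2, 3 (the three momentum-moment rows), i.e. (M g⁽¹⁾)_k = −(Δt/ς_k) c_s² b_k. -/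

import Mathlib

open Finset

/-- The 7 discrete velocities of the D3Q7 lattice. -/
def c : Fin 7 → Fin 3 → ℝ :=
  ![![0,0,0], ![1,0,0], ![-1,0,0], ![0,1,0], ![0,-1,0], ![0,0,1], ![0,0,-1]]

/-- The D3Q7 weights: `w_0 = 1 - w̄` and `w_i = w̄/6` for `i = 1,…,6`. -/
noncomputable def w (wb : ℝ) : Fin 7 → ℝ :=
  ![1 - wb, wb/6, wb/6, wb/6, wb/6, wb/6, wb/6]

/-- The non-orthogonal D3Q7 transformation matrix. -/
def M : Matrix (Fin 7) (Fin 7) ℝ :=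
  !![1, 1, 1, 1, 1, 1, 1;
     0, 1, -1, 0, 0, 0, 0;
     0, 0, 0, 1, -1, 0, 0;
     0, 0, 0, 0, 0, 1, -1;
     0, 1, 1, 1, 1, 1, 1;
     0, 1, 1, -1, -1, 0, 0;
     0, 1, 1, 0, 0, -1, -1]

/-! The first-order equation is solved for the collision term `M⁻¹ΛM g⁽¹⁾`, which is a multiple
of an equilibrium-shaped vector `wᵢ (s + cᵢ·u)`. Applying `M` turns the left side into `Λ M g⁽¹⁾`,
while the lattice isotropy of the D3Q7 weights (`∑ wᵢ = 1`, `∑ wᵢ cᵢ = 0`,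
`∑ wᵢ cᵢ cᵢᵀ = c_s² I`) reads off the zeroth and first moments of the right side. The zeroth
moment of `g⁽¹⁾` vanishes, which forces `ρc_v a = F̄`. -/

open scoped Matrix

theorem Matrix.mulVec_inv_mul_diagonal_mul_mulVec {n R : Type*} [Fintype n] [DecidableEq n]
    [CommRing R] (A : Matrix n n R) (hA : IsUnit A.det) (d v : n → R) :
    A *ᵥ ((A⁻¹ * Matrix.diagonal d * A) *ᵥ v) = d * (A *ᵥ v) := by
  ext i
  rw [Matrix.mulVec_mulVec, ← Matrix.mul_assoc, ← Matrix.mul_assoc, Matrix.mul_nonsing_inv A hA,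
    Matrix.one_mul, ← Matrix.mulVec_mulVec, Matrix.mulVec_diagonal, Pi.mul_apply]

theorem isUnit_det_M : IsUnit M.det :=
  Matrix.isUnit_det_of_right_inverse (B := !![1, 0, 0, 0, -1, 0, 0;
     0, 1/2, 0, 0, 1/6, 1/6, 1/6;
     0, -1/2, 0, 0, 1/6, 1/6, 1/6;
     0, 0, 1/2, 0, 1/6, -1/3, 1/6;
     0, 0, -1/2, 0, 1/6, -1/3, 1/6;
     0, 0, 0, 1/2, 1/6, 1/6, -1/3;
     0, 0, 0, -1/2, 1/6, 1/6, -1/3]) (by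
    ext i j
    fin_cases i <;> fin_cases j <;>
      norm_num [M, Matrix.mul_apply, Fin.sum_univ_succ, Matrix.one_apply])

theorem M_mulVec_zero (v : Fin 7 → ℝ) : (M *ᵥ v) 0 = ∑ i, v i := by
  simp [M, Matrix.mulVec, dotProduct, Fin.sum_univ_succ]

theorem M_mulVec_velocity (α : Fin 3) (v : Fin 7 → ℝ) :
    (M *ᵥ v) ⟨α + 1, by omega⟩ = ∑ i, c i α * v i := by
  fin_cases α <;> simp [M, c, Matrix.mulVec, dotProduct, Fin.sum_univ_succ]

theorem sum_w_mul_add_velocity_dot (wb s : ℝ) (u : Fin 3 → ℝ) :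
    ∑ i, w wb i * (s + ∑ β, c i β * u β) = s := by
  simp [w, c, Fin.sum_univ_succ]
  ring

theorem sum_velocity_mul_w_mul_add_velocity_dot (wb s : ℝ) (u : Fin 3 → ℝ) (α : Fin 3) :
    ∑ i, c i α * (w wb i * (s + ∑ β, c i β * u β)) = wb / 3 * u α := by
  fin_cases α <;> simp [w, c, Fin.sum_univ_succ] <;> ring

theorem d3q7_chapman_enskog_first_order_general
    (wb : ℝ)
    (Δt : ℝ) (hΔt : 0 < Δt)
    (ς : Fin 7 → ℝ)
    (rcv : ℝ)
    (a : ℝ) (b : Fin 3 → ℝ) (Fb : ℝ)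
    (g1 : Fin 7 → ℝ) (hg1 : ∑ i, g1 i = 0)
    (h : ∀ i : Fin 7,
      rcv * w wb i * a + (∑ α, c i α * b α) * w wb i =
        -(1/Δt) * ((M⁻¹ * Matrix.diagonal ς * M).mulVec g1) i + w wb i * Fb) :
    rcv * a = Fb ∧
    (ς 1 * (M.mulVec g1) 1 = -Δt * (wb/3) * b 0) ∧
    (ς 2 * (M.mulVec g1) 2 = -Δt * (wb/3) * b 1) ∧
    (ς 3 * (M.mulVec g1) 3 = -Δt * (wb/3) * b 2) := by
  set feq : Fin 7 → ℝ := fun i => w wb i * ((Fb - rcv * a) + ∑ β, c i β * (-b) β)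
  have hcollision : (M⁻¹ * Matrix.diagonal ς * M) *ᵥ g1 = Δt • feq := by
    ext i
    have hi := h i
    simp only [feq, Pi.smul_apply, smul_eq_mul, Pi.neg_apply, mul_neg, Finset.sum_neg_distrib]
    field_simp at hi
    linarith
  have hmoment (k : Fin 7) : ς k * (M *ᵥ g1) k = Δt * (M *ᵥ feq) k := by
    rw [← Pi.mul_apply ς, ← Matrix.mulVec_inv_mul_diagonal_mul_mulVec M isUnit_det_M,
      hcollision, Matrix.mulVec_smul, Pi.smul_apply, smul_eq_mul]
  have hgradient (α : Fin 3) :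
      ς ⟨α + 1, by omega⟩ * (M *ᵥ g1) ⟨α + 1, by omega⟩ = -Δt * (wb / 3) * b α := by
    rw [hmoment, M_mulVec_velocity, sum_velocity_mul_w_mul_add_velocity_dot, Pi.neg_apply]
    ring
  have hconserved : Δt * (Fb - rcv * a) = 0 := by
    have h0 := hmoment 0
    rwa [M_mulVec_zero, M_mulVec_zero, hg1, sum_w_mul_add_velocity_dot, mul_zero, eq_comm] at h0
  have hbalance := (mul_eq_zero.mp hconserved).resolve_left hΔt.ne'
  exact ⟨by linarith [hbalance], hgradient 0, hgradient 1, hgradient 2⟩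

/-- First-order Chapman–Enskog moment equations for the D3Q7 thermal model:
the conserved moment gives `ρc_v ∂_{t₁}T = F̄`, and the momentum-moment rows
give the local gradient formulas `ς_k (M g⁽¹⁾)_k = -Δt c_s² (∇₁T)_k`. -/
theorem d3q7_chapman_enskog_first_order
    (wb : ℝ) (hwb : wb ∈ Set.Ioo (0:ℝ) 1)
    (Δt : ℝ) (hΔt : 0 < Δt)
    (ς : Fin 7 → ℝ) (hς : ∀ k, ς k ≠ 0)
    (rcv : ℝ) (hrcv : 0 < rcv)
    (a : ℝ) (b : Fin 3 → ℝ) (Fb : ℝ)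
    (g1 : Fin 7 → ℝ) (hg1 : ∑ i, g1 i = 0)
    (h : ∀ i : Fin 7,
      rcv * w wb i * a + (∑ α, c i α * b α) * w wb i =
        -(1/Δt) * ((M⁻¹ * Matrix.diagonal ς * M).mulVec g1) i + w wb i * Fb) :
    rcv * a = Fb ∧
    (ς 1 * (M.mulVec g1) 1 = -Δt * (wb/3) * b 0) ∧
    (ς 2 * (M.mulVec g1) 2 = -Δt * (wb/3) * b 1) ∧
    (ς 3 * (M.mulVec g1) 3 = -Δt * (wb/3) * b 2) :=
  d3q7_chapman_enskog_first_order_general wb Δt hΔt ς rcv a b Fb g1 hg1 h
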